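/- With $c_{h,k}$ as defined (the Fourier coefficient of the Navier–Stokes nonlinearity), one has the uniform bound $c_{h,k}^2 \leq \frac{|k|^2}{4\pi^2}$ for all admissible $h, k$. -/
import Mathlib


noncomputable def znorm (k : ℤ × ℤ) : ℝ := Real.sqrt ((k.1 : ℝ)^2 + (k.2 : ℝ)^2)

/-- The Fourier coefficient of the 2D Navier–Stokes nonlinearity. -/
noncomputable def nsCoeff (h k : ℤ × ℤ) : ℝ :=
  -(1 / (4 * Real.pi)) *
    (((-h.2 : ℝ) * k.1 + (h.1 : ℝ) * k.2) / (znorm h * znorm (k - h))) *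
    (znorm k - 2 * ((h.1 : ℝ) * k.1 + (h.2 : ℝ) * k.2) / znorm k)

lemma znorm_sq (k : ℤ × ℤ) : znorm k ^ 2 = (k.1 : ℝ)^2 + (k.2 : ℝ)^2 := by
  unfold znorm
  rw [Real.sq_sqrt (by positivity)]

lemma znorm_pos {k : ℤ × ℤ} (hk : k ≠ 0) : 0 < znorm k := by
  have h1 : k.1 ≠ 0 ∨ k.2 ≠ 0 := by
    by_contra hc
    push_neg at hc
    exact hk (Prod.ext hc.1 hc.2)
  have hp : 0 < (k.1 : ℝ)^2 + (k.2 : ℝ)^2 := by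
    rcases h1 with h | h
    · have : (k.1 : ℝ) ≠ 0 := Int.cast_ne_zero.mpr h
      positivity
    · have : (k.2 : ℝ) ≠ 0 := Int.cast_ne_zero.mpr h
      positivity
  exact Real.sqrt_pos.mpr hp

lemma abs_le_of_sq (x y : ℝ) (hy : 0 ≤ y) (hxy : x^2 ≤ y^2) : |x| ≤ y := by
  nlinarith [sq_abs x, abs_nonneg x]

lemma aux_bound (A B K D P : ℝ) (hA : 0 < A) (hB : 0 < B) (hK : 0 < K)
    (key : (D * (K^2 - 2*P))^2 ≤ 4 * (A*B*K^2)^2) :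
    (-(1 / (4 * Real.pi)) * (D / (A * B)) * (K - 2 * P / K))^2
      ≤ K^2 / (4 * Real.pi^2) := by
  have hπ := Real.pi_pos
  have hrw : (-(1 / (4 * Real.pi)) * (D / (A * B)) * (K - 2 * P / K))^2
      = (D * (K^2 - 2*P))^2 / (16 * Real.pi^2 * (A*B*K)^2) := by
    field_simp
    ring
  rw [hrw, div_le_div_iff₀ (by positivity) (by positivity)]
  have h2 : (D * (K^2 - 2*P))^2 * (4 * Real.pi^2)
      ≤ (4 * (A*B*K^2)^2) * (4 * Real.pi^2) :=
    mul_le_mul_of_nonneg_right key (by positivity)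
  calc (D * (K^2 - 2*P))^2 * (4 * Real.pi^2)
      ≤ (4 * (A*B*K^2)^2) * (4 * Real.pi^2) := h2
    _ = K^2 * (16 * Real.pi^2 * (A*B*K)^2) := by ring

set_option maxHeartbeats 1000000 in
/-- the uniform bound `c_{h,k}² ≤ |k|²/(4π²)`. -/
theorem nsCoeff_sq_bound (h k : ℤ × ℤ) (hh : h ≠ 0) (hk : k ≠ 0) (hhk : h ≠ k) :
    nsCoeff h k ^ 2 ≤ znorm k ^ 2 / (4 * Real.pi ^ 2) := by
  have hA : 0 < znorm h := znorm_pos hh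
  have hK : 0 < znorm k := znorm_pos hk
  have hkh : k - h ≠ 0 := fun hc => hhk (by
    have : k = h := by
      have := sub_eq_zero.mp hc
      exact this
    exact this.symm)
  have hB : 0 < znorm (k - h) := znorm_pos hkh
  set A := znorm h with hAdef
  set B := znorm (k - h) with hBdef
  set K := znorm k with hKdef
  set h1 := (h.1 : ℝ); set h2 := (h.2 : ℝ)
  set k1 := (k.1 : ℝ); set k2 := (k.2 : ℝ)
  have hA2 : A^2 = h1^2 + h2^2 := znorm_sq h
  have hK2 : K^2 = k1^2 + k2^2 := znorm_sq k
  have hB2 : B^2 = (k1 - h1)^2 + (k2 - h2)^2 := by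
    have := znorm_sq (k - h)
    rw [hBdef]
    rw [this]
    push_cast [Prod.fst_sub, Prod.snd_sub]
    ring
  set D := -h2 * k1 + h1 * k2 with hDdef
  set P := h1 * k1 + h2 * k2 with hPdef
  set Q := (k1 - h1) * k1 + (k2 - h2) * k2 with hQdef
  have id1 : D^2 + P^2 = A^2 * K^2 := by rw [hA2, hK2]; ring
  have id2 : D^2 + Q^2 = B^2 * K^2 := by rw [hB2, hK2]; ring
  have hQP : K^2 - 2*P = Q - P := by rw [hK2, hQdef, hPdef]; ring
  -- Cauchy-Schwarz style bounds
  have hDQ : |D * Q| ≤ A * B * K^2 := by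
    apply abs_le_of_sq _ _ (by positivity)
    have h1' : D^2 ≤ A^2 * K^2 := by nlinarith [sq_nonneg P]
    have h2' : Q^2 ≤ B^2 * K^2 := by nlinarith [sq_nonneg D]
    calc (D * Q)^2 = D^2 * Q^2 := by ring
      _ ≤ (A^2 * K^2) * (B^2 * K^2) :=
          mul_le_mul h1' h2' (sq_nonneg Q) (by positivity)
      _ = (A * B * K^2)^2 := by ring
  have hDP : |D * P| ≤ A * B * K^2 := by
    apply abs_le_of_sq _ _ (by positivity)
    have h1' : D^2 ≤ B^2 * K^2 := by nlinarith [sq_nonneg Q]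
    have h2' : P^2 ≤ A^2 * K^2 := by nlinarith [sq_nonneg D]
    calc (D * P)^2 = D^2 * P^2 := by ring
      _ ≤ (B^2 * K^2) * (A^2 * K^2) :=
          mul_le_mul h1' h2' (sq_nonneg P) (by positivity)
      _ = (A * B * K^2)^2 := by ring
  have key : (D * (K^2 - 2*P))^2 ≤ 4 * (A*B*K^2)^2 := by
    rw [hQP]
    nlinarith [hDQ, hDP, le_abs_self (D*Q), neg_abs_le (D*Q),
      le_abs_self (D*P), neg_abs_le (D*P), sq_nonneg (D*Q - D*P)]
  have hceq : nsCoeff h k = -(1 / (4 * Real.pi)) * (D / (A * B)) * (K - 2 * P / K) := by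
    unfold nsCoeff
    rw [← hAdef, ← hBdef, ← hKdef, hDdef, hPdef]
  rw [hceq]
  exact aux_bound A B K D P hA hB hK key
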